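/- Let g ≥ 0 and n ≥ 1 be integers and let S ⊆ {1,…,n} with |S| ≥ 2. Let p ∈ D_{g,n} satisfy Σ_{j∈S} p_j = 1 and Σ_{j∈J} p_j ≠ 1 for every subset J ≠ S with |J| ≥ 2. Then p lies in the closure of exactly two connected components C⁺ and C⁻ of U_{g,n}; these are characterized by Σ_{j∈S} a_j > 1 for all a ∈ C⁺ and Σ_{j∈S} a_j < 1 for all a ∈ C⁻; and for every J ≠ S with |J| ≥ 2 and all a ∈ C⁺, b ∈ C⁻, one has Σ_{j∈J} a_j < 1 if and only if Σ_{j∈J} b_j < 1. -/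

import Mathlib

/-- The Hassett domain `D_{g,n} = {a ∈ (0,1]^n : a₁ + ⋯ + aₙ > 2 - 2g}`. -/
def hassettDomain (g n : ℕ) : Set (Fin n → ℝ) :=
  {a | (∀ j, 0 < a j ∧ a j ≤ 1) ∧ (2 : ℝ) - 2 * g < ∑ j, a j}

/-- The wall `W_J = {a ∈ D_{g,n} : ∑_{j ∈ J} a_j = 1}`. -/
def hassettWall (g n : ℕ) (J : Finset (Fin n)) : Set (Fin n → ℝ) :=
  {a ∈ hassettDomain g n | ∑ j ∈ J, a j = 1}

/-- The complement of the walls `U_{g,n} = D_{g,n} \ ⋃_{|J| ≥ 2} W_J`. -/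
def hassettChamberSpace (g n : ℕ) : Set (Fin n → ℝ) :=
  hassettDomain g n \ ⋃ (J : Finset (Fin n)) (_ : 2 ≤ J.card), hassettWall g n J

/-- A chamber: a connected component of `U_{g,n}`. -/
def IsChamber (g n : ℕ) (C : Set (Fin n → ℝ)) : Prop :=
  ∃ a ∈ hassettChamberSpace g n, C = connectedComponentIn (hassettChamberSpace g n) a

/-!
Near `p` the only wall is `W_S`. The points of `D_{g,n}` lying strictly on the same side as `p`
of every other wall form a convex set `K` whose trace near `p` is a neighbourhood of `p` in
`D_{g,n}`. Its two halves `K ∩ {∑_S > 1}` and `K ∩ {∑_S < 1}` are convex, avoid all walls, and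
both accumulate at `p`: move `p` along the indicator of `S`, which stays in `D_{g,n}` because
`p_j < 1` for `j ∈ S`. Every chamber whose closure contains `p` meets `K` off `W_S`, hence
contains one of the halves. Finally, by the intermediate value theorem the side of a wall is
constant on a chamber.
-/

open Finset Set Topology Filter

theorem IsPreconnected.lt_iff_lt_of_forall_ne {X α : Type*} [TopologicalSpace X] [LinearOrder α]
    [TopologicalSpace α] [OrderClosedTopology α] {s : Set X} (hs : IsPreconnected s) {f : X → α}
    (hf : ContinuousOn f s) {c : α} (hc : ∀ x ∈ s, f x ≠ c) {x y : X} (hx : x ∈ s) (hy : y ∈ s) :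
    f x < c ↔ f y < c := by
  suffices key : ∀ ⦃x y⦄, x ∈ s → y ∈ s → f x < c → f y < c from ⟨key hx hy, key hy hx⟩
  intro x y hx hy hxc
  by_contra! hyc
  obtain ⟨z, hz, hzc⟩ := hs.intermediate_value hx hy hf ⟨hxc.le, hyc⟩
  exact hc z hz hzc

theorem IsPreconnected.lt_iff_lt_of_forall_ne' {X α : Type*} [TopologicalSpace X] [LinearOrder α]
    [TopologicalSpace α] [OrderClosedTopology α] {s : Set X} (hs : IsPreconnected s) {f : X → α}
    (hf : ContinuousOn f s) {c : α} (hc : ∀ x ∈ s, f x ≠ c) {x y : X} (hx : x ∈ s) (hy : y ∈ s) :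
    c < f x ↔ c < f y := by
  rw [← not_le, ← not_le, (hc x hx).le_iff_lt, (hc y hy).le_iff_lt,
    hs.lt_iff_lt_of_forall_ne hf hc hx hy]

section Walls

variable {ι : Type*} {J S : Finset ι} {a b p : ι → ℝ}

theorem isLinearMap_sum_apply (J : Finset ι) : IsLinearMap ℝ fun a : ι → ℝ => ∑ j ∈ J, a j :=
  ⟨fun _ _ => sum_add_distrib, fun _ _ => (mul_sum ..).symm⟩

def SameSideOfWall (J : Finset ι) (a b : ι → ℝ) : Prop :=
  0 < (∑ j ∈ J, a j - 1) * (∑ j ∈ J, b j - 1)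

theorem SameSideOfWall.sum_ne_one (h : SameSideOfWall J a b) : ∑ j ∈ J, a j ≠ 1 := by
  intro h1
  simp [SameSideOfWall, h1] at h

theorem SameSideOfWall.lt_one_iff (h : SameSideOfWall J a b) :
    ∑ j ∈ J, a j < 1 ↔ ∑ j ∈ J, b j < 1 := by
  rcases pos_and_pos_or_neg_and_neg_of_mul_pos h with ⟨ha, hb⟩ | ⟨ha, hb⟩ <;>
    constructor <;> intro <;> linarith

theorem sameSideOfWall_self (h : ∑ j ∈ J, a j ≠ 1) : SameSideOfWall J a a :=
  mul_self_pos.2 (sub_ne_zero.2 h)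

theorem convex_setOf_sameSideOfWall (J : Finset ι) (b : ι → ℝ) :
    Convex ℝ {a | SameSideOfWall J a b} := by
  intro x hx y hy s t hs ht hst
  have hcombo : (∑ j ∈ J, (s • x + t • y) j - 1) * (∑ j ∈ J, b j - 1) =
      s * ((∑ j ∈ J, x j - 1) * (∑ j ∈ J, b j - 1)) +
        t * ((∑ j ∈ J, y j - 1) * (∑ j ∈ J, b j - 1)) := by
    simp only [Pi.add_apply, Pi.smul_apply, smul_eq_mul, sum_add_distrib, ← mul_sum]
    linear_combination (∑ j ∈ J, b j - 1) * hst
  show 0 < (∑ j ∈ J, (s • x + t • y) j - 1) * (∑ j ∈ J, b j - 1)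
  rw [hcombo]
  exact convex_Ioi (0 : ℝ) hx hy hs ht hst

theorem eventually_sameSideOfWall (hb : ∑ j ∈ J, b j ≠ 1) : ∀ᶠ a in 𝓝 b, SameSideOfWall J a b :=
  ((by fun_prop : Continuous fun a : ι → ℝ => (∑ j ∈ J, a j - 1) * (∑ j ∈ J, b j - 1)).tendsto
    b).eventually_const_lt (sameSideOfWall_self hb)

def sameSideExcept (S : Finset ι) (p : ι → ℝ) : Set (ι → ℝ) :=
  {a | ∀ J : Finset ι, J ≠ S → 2 ≤ #J → SameSideOfWall J a p}

theorem convex_sameSideExcept : Convex ℝ (sameSideExcept S p) :=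
  fun _ hx _ hy _ _ hs ht hst J hJS hJ =>
    convex_setOf_sameSideOfWall J p (hx J hJS hJ) (hy J hJS hJ) hs ht hst

theorem sameSideExcept_mem_nhds [Finite ι]
    (hpJ : ∀ J : Finset ι, J ≠ S → 2 ≤ #J → ∑ j ∈ J, p j ≠ 1) : sameSideExcept S p ∈ 𝓝 p := by
  refine eventually_all.2 fun J => ?_
  by_cases hJ : J ≠ S ∧ 2 ≤ #J
  · filter_upwards [eventually_sameSideOfWall (hpJ J hJ.1 hJ.2)] with a ha _ _ using ha
  · exact .of_forall fun _ hJS hJ2 => absurd ⟨hJS, hJ2⟩ hJ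

theorem lt_one_of_sum_eq_one (hpos : ∀ j, 0 < p j) (hS : 2 ≤ #S) (hpS : ∑ j ∈ S, p j = 1)
    {j : ι} (hj : j ∈ S) : p j < 1 := by
  obtain ⟨k, hk, hkj⟩ := exists_mem_ne hS j
  exact hpS ▸ single_lt_sum hkj hj hk (hpos k) fun i _ _ => (hpos i).le

def shiftOn [DecidableEq ι] (S : Finset ι) (p : ι → ℝ) (s : ℝ) : ι → ℝ :=
  fun j => if j ∈ S then p j + s else p j

theorem continuous_shiftOn [DecidableEq ι] : Continuous (shiftOn S p) :=
  continuous_pi fun j => by unfold shiftOn; split_ifs <;> fun_prop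

theorem shiftOn_zero [DecidableEq ι] : shiftOn S p 0 = p := by
  ext j
  simp [shiftOn]

theorem sum_shiftOn [DecidableEq ι] (s : ℝ) :
    ∑ j ∈ S, shiftOn S p s j = ∑ j ∈ S, p j + #S * s := by
  unfold shiftOn
  rw [sum_congr rfl fun j hj => if_pos hj, sum_add_distrib, sum_const, nsmul_eq_mul]

end Walls

section Hassett

variable {g n : ℕ} {S : Finset (Fin n)} {p : Fin n → ℝ}

theorem mem_hassettChamberSpace {a : Fin n → ℝ} :
    a ∈ hassettChamberSpace g n ↔
      a ∈ hassettDomain g n ∧ ∀ J : Finset (Fin n), 2 ≤ #J → ∑ j ∈ J, a j ≠ 1 := by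
  constructor
  · rintro ⟨haD, haW⟩
    exact ⟨haD, fun J hJ h1 => haW (mem_iUnion₂.2 ⟨J, hJ, haD, h1⟩)⟩
  · rintro ⟨haD, haW⟩
    refine ⟨haD, fun haU => ?_⟩
    obtain ⟨J, hJ, -, h1⟩ := mem_iUnion₂.1 haU
    exact haW J hJ h1

theorem convex_hassettDomain (g n : ℕ) : Convex ℝ (hassettDomain g n) := by
  have hD : hassettDomain g n =
      univ.pi (fun _ => Ioc (0 : ℝ) 1) ∩ {a | 2 - 2 * (g : ℝ) < ∑ j, a j} := by
    ext a
    simp [hassettDomain, Set.mem_pi]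
  rw [hD]
  exact (convex_pi fun _ _ => convex_Ioc 0 1).inter
    (convex_halfSpace_gt (isLinearMap_sum_apply _) _)

theorem eventually_shiftOn_mem_hassettDomain (hp : p ∈ hassettDomain g n)
    (hlt : ∀ j ∈ S, p j < 1) : ∀ᶠ s in 𝓝 0, shiftOn S p s ∈ hassettDomain g n := by
  have hT : Tendsto (shiftOn S p) (𝓝 0) (𝓝 p) := continuous_shiftOn.tendsto' 0 p shiftOn_zero
  have hcoord : ∀ j, ∀ᶠ s in 𝓝 (0 : ℝ), 0 < shiftOn S p s j ∧ shiftOn S p s j ≤ 1 := by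
    intro j
    by_cases hj : j ∈ S
    · filter_upwards [((continuous_apply j).tendsto p).comp hT
        (Ioo_mem_nhds (hp.1 j).1 (hlt j hj))] with s hs using ⟨hs.1, hs.2.le⟩
    · simpa [shiftOn, hj] using hp.1 j
  have hsum : ∀ᶠ s in 𝓝 (0 : ℝ), 2 - 2 * (g : ℝ) < ∑ j, shiftOn S p s j :=
    (((continuous_finsetSum _ fun j _ => continuous_apply j).tendsto p).comp hT).eventually_const_lt
      hp.2
  filter_upwards [eventually_all.2 hcoord, hsum] with s h1 h2 using ⟨h1, h2⟩

def localCell (g : ℕ) (S : Finset (Fin n)) (p : Fin n → ℝ) (H : Set ℝ) : Set (Fin n → ℝ) :=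
  hassettDomain g n ∩ sameSideExcept S p ∩ {a | ∑ j ∈ S, a j ∈ H}

theorem localCell_subset {H : Set ℝ} (hH : 1 ∉ H) :
    localCell g S p H ⊆ hassettChamberSpace g n := by
  rintro a ⟨⟨haD, ha_same⟩, haH⟩
  refine mem_hassettChamberSpace.2 ⟨haD, fun J hJ => ?_⟩
  by_cases hJS : J = S
  · exact hJS ▸ ne_of_mem_of_not_mem haH hH
  · exact (ha_same J hJS hJ).sum_ne_one

theorem localCell_subset_connectedComponentIn {H : Set ℝ} (hH : Convex ℝ H) (h1 : 1 ∉ H)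
    {q : Fin n → ℝ} (hq : q ∈ localCell g S p H) :
    localCell g S p H ⊆ connectedComponentIn (hassettChamberSpace g n) q :=
  (((convex_hassettDomain g n).inter convex_sameSideExcept).inter
    (hH.is_linear_preimage (isLinearMap_sum_apply S))).isPreconnected.subset_connectedComponentIn
      hq (localCell_subset h1)

theorem exists_mem_localCell_and_mem_closure (hS : 2 ≤ #S) (hp : p ∈ hassettDomain g n)
    (hpS : ∑ j ∈ S, p j = 1) (hpJ : ∀ J : Finset (Fin n), J ≠ S → 2 ≤ #J → ∑ j ∈ J, p j ≠ 1)
    {l : Filter ℝ} [l.NeBot] (hl : l ≤ 𝓝 0) {H : Set ℝ} (hH : ∀ᶠ s in l, 1 + (#S : ℝ) * s ∈ H) :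
    (localCell g S p H).Nonempty ∧ p ∈ closure (localCell g S p H) := by
  have hT : Tendsto (shiftOn S p) (𝓝 0) (𝓝 p) := continuous_shiftOn.tendsto' 0 p shiftOn_zero
  have hlt : ∀ j ∈ S, p j < 1 := fun j => lt_one_of_sum_eq_one (fun j => (hp.1 j).1) hS hpS
  have hmem : ∀ᶠ s in l, shiftOn S p s ∈ localCell g S p H := by
    filter_upwards [hl (eventually_shiftOn_mem_hassettDomain hp hlt),
      hl (hT (sameSideExcept_mem_nhds hpJ)), hH] with s hD h_same hs
    exact ⟨⟨hD, h_same⟩, show _ ∈ H by rwa [sum_shiftOn, hpS]⟩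
  obtain ⟨s, hs⟩ := hmem.exists
  exact ⟨⟨_, hs⟩, mem_closure_of_tendsto (hT.mono_left hl) hmem⟩

theorem sum_lt_one_iff_of_mem_connectedComponentIn {J : Finset (Fin n)} (hJ : 2 ≤ #J)
    {a x : Fin n → ℝ} (ha : a ∈ connectedComponentIn (hassettChamberSpace g n) x) :
    ∑ j ∈ J, a j < 1 ↔ ∑ j ∈ J, x j < 1 :=
  isPreconnected_connectedComponentIn.lt_iff_lt_of_forall_ne (by fun_prop)
    (fun _ hb => (mem_hassettChamberSpace.1 (connectedComponentIn_subset _ _ hb)).2 J hJ) ha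
    (mem_connectedComponentIn (connectedComponentIn_nonempty_iff.1 ⟨a, ha⟩))

theorem one_lt_sum_iff_of_mem_connectedComponentIn {J : Finset (Fin n)} (hJ : 2 ≤ #J)
    {a x : Fin n → ℝ} (ha : a ∈ connectedComponentIn (hassettChamberSpace g n) x) :
    1 < ∑ j ∈ J, a j ↔ 1 < ∑ j ∈ J, x j :=
  isPreconnected_connectedComponentIn.lt_iff_lt_of_forall_ne' (by fun_prop)
    (fun _ hb => (mem_hassettChamberSpace.1 (connectedComponentIn_subset _ _ hb)).2 J hJ) ha
    (mem_connectedComponentIn (connectedComponentIn_nonempty_iff.1 ⟨a, ha⟩))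

theorem eq_or_eq_of_mem_closure (hS : 2 ≤ #S)
    (hpJ : ∀ J : Finset (Fin n), J ≠ S → 2 ≤ #J → ∑ j ∈ J, p j ≠ 1) {qp qm : Fin n → ℝ}
    (hqp : qp ∈ localCell g S p (Ioi 1)) (hqm : qm ∈ localCell g S p (Iio 1))
    {C : Set (Fin n → ℝ)} (hC : IsChamber g n C) (hpC : p ∈ closure C) :
    C = connectedComponentIn (hassettChamberSpace g n) qp ∨
      C = connectedComponentIn (hassettChamberSpace g n) qm := by
  obtain ⟨c, -, rfl⟩ := hC
  obtain ⟨a, ha_same, ha⟩ := mem_closure_iff_nhds.1 hpC _ (sameSideExcept_mem_nhds hpJ)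
  obtain ⟨haD, haS⟩ := mem_hassettChamberSpace.1 (connectedComponentIn_subset _ _ ha)
  rw [connectedComponentIn_eq ha]
  rcases (haS S hS).lt_or_gt with h | h
  · refine .inr (connectedComponentIn_eq ?_).symm
    exact localCell_subset_connectedComponentIn (convex_Iio 1) self_notMem_Iio hqm
      ⟨⟨haD, ha_same⟩, h⟩
  · refine .inl (connectedComponentIn_eq ?_).symm
    exact localCell_subset_connectedComponentIn (convex_Ioi 1) self_notMem_Ioi hqp
      ⟨⟨haD, ha_same⟩, h⟩

end Hassett

theorem stmt3_general (g n : ℕ)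
    (S : Finset (Fin n)) (hS : 2 ≤ S.card)
    (p : Fin n → ℝ) (hp : p ∈ hassettDomain g n)
    (hpS : ∑ j ∈ S, p j = 1)
    (hpJ : ∀ J : Finset (Fin n), J ≠ S → 2 ≤ J.card → ∑ j ∈ J, p j ≠ 1) :
    ∃ Cp Cm : Set (Fin n → ℝ),
      Cp ≠ Cm ∧
      IsChamber g n Cp ∧ IsChamber g n Cm ∧
      p ∈ closure Cp ∧ p ∈ closure Cm ∧
      (∀ C : Set (Fin n → ℝ), IsChamber g n C → p ∈ closure C → C = Cp ∨ C = Cm) ∧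
      (∀ a ∈ Cp, 1 < ∑ j ∈ S, a j) ∧
      (∀ a ∈ Cm, ∑ j ∈ S, a j < 1) ∧
      (∀ J : Finset (Fin n), J ≠ S → 2 ≤ J.card →
        ∀ a ∈ Cp, ∀ b ∈ Cm, ((∑ j ∈ J, a j < 1) ↔ (∑ j ∈ J, b j < 1))) := by
  set U := hassettChamberSpace g n
  have hSpos : (0 : ℝ) < #S := by exact_mod_cast (show 0 < #S by omega)
  obtain ⟨⟨qp, hqp⟩, hclp⟩ := exists_mem_localCell_and_mem_closure hS hp hpS hpJ
    (l := 𝓝[>] 0) nhdsWithin_le_nhds (H := Ioi 1)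
    (eventually_nhdsWithin_of_forall fun (s : ℝ) (hs : 0 < s) => by simpa using mul_pos hSpos hs)
  obtain ⟨⟨qm, hqm⟩, hclm⟩ := exists_mem_localCell_and_mem_closure hS hp hpS hpJ
    (l := 𝓝[<] 0) nhdsWithin_le_nhds (H := Iio 1)
    (eventually_nhdsWithin_of_forall fun (s : ℝ) (hs : s < 0) => by
      simpa using mul_neg_of_pos_of_neg hSpos hs)
  have hVp := localCell_subset_connectedComponentIn (convex_Ioi 1) self_notMem_Ioi hqp
  have hVm := localCell_subset_connectedComponentIn (convex_Iio 1) self_notMem_Iio hqm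
  have hqp_gt : 1 < ∑ j ∈ S, qp j := hqp.2
  have hqm_lt : ∑ j ∈ S, qm j < 1 := hqm.2
  refine ⟨connectedComponentIn U qp, connectedComponentIn U qm, fun h => ?_,
    ⟨qp, localCell_subset self_notMem_Ioi hqp, rfl⟩,
    ⟨qm, localCell_subset self_notMem_Iio hqm, rfl⟩,
    closure_mono hVp hclp, closure_mono hVm hclm,
    fun C hC hpC => eq_or_eq_of_mem_closure hS hpJ hqp hqm hC hpC,
    fun a ha => (one_lt_sum_iff_of_mem_connectedComponentIn hS ha).2 hqp_gt,
    fun a ha => (sum_lt_one_iff_of_mem_connectedComponentIn hS ha).2 hqm_lt,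
    fun J hJS hJ a ha b hb => ?_⟩
  · have hqp_mem : qp ∈ connectedComponentIn U qm := h ▸ hVp hqp
    exact hqp_gt.not_gt ((sum_lt_one_iff_of_mem_connectedComponentIn hS hqp_mem).2 hqm_lt)
  · rw [sum_lt_one_iff_of_mem_connectedComponentIn hJ ha,
      sum_lt_one_iff_of_mem_connectedComponentIn hJ hb, (hqp.1.2 J hJS hJ).lt_one_iff,
      (hqm.1.2 J hJS hJ).lt_one_iff]

theorem stmt3 (g n : ℕ) (hn : 1 ≤ n)
    (S : Finset (Fin n)) (hS : 2 ≤ S.card)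
    (p : Fin n → ℝ) (hp : p ∈ hassettDomain g n)
    (hpS : ∑ j ∈ S, p j = 1)
    (hpJ : ∀ J : Finset (Fin n), J ≠ S → 2 ≤ J.card → ∑ j ∈ J, p j ≠ 1) :
    ∃ Cp Cm : Set (Fin n → ℝ),
      Cp ≠ Cm ∧
      IsChamber g n Cp ∧ IsChamber g n Cm ∧
      p ∈ closure Cp ∧ p ∈ closure Cm ∧
      (∀ C : Set (Fin n → ℝ), IsChamber g n C → p ∈ closure C → C = Cp ∨ C = Cm) ∧
      (∀ a ∈ Cp, 1 < ∑ j ∈ S, a j) ∧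
      (∀ a ∈ Cm, ∑ j ∈ S, a j < 1) ∧
      (∀ J : Finset (Fin n), J ≠ S → 2 ≤ J.card →
        ∀ a ∈ Cp, ∀ b ∈ Cm, ((∑ j ∈ J, a j < 1) ↔ (∑ j ∈ J, b j < 1))) :=
  stmt3_general g n S hS p hp hpS hpJ
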